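/- arXiv:quant-ph/0608154 — 3 statements merged into one kernel-verified Lean document; each statement's English description precedes it below -/
import Mathlib

section
/- An inhomogeneous Markov chain on a nonempty finite state space S with transition matrices G(t) is weakly ergodic if and only if there exists a strictly increasing sequence of nonnegative integers t_0 < t_1 < t_2 < ... such that the series Σ_{i=0}^∞ (1 − α(G^{t_{i+1},t_i})) diverges to infinity, where α denotes the coefficient of ergodicity. -/
open Finset Filter

namespace QAPaper

variable {S : Type*}

/-- A probability distribution on the finite state space `S`, viewed as a vector. -/
def IsProbVec [Fintype S] (p : S → ℝ) : Prop :=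
  (∀ x, 0 ≤ p x) ∧ ∑ x, p x = 1

/-- The ℓ¹ norm distance `‖p - p'‖ = ∑ₓ |p(x) - p'(x)|`. -/
noncomputable def dist1 [Fintype S] (p p' : S → ℝ) : ℝ := ∑ x, |p x - p' x|

/-- A column-stochastic matrix: entries nonnegative, columns sum to one. -/
def IsStochastic [Fintype S] (G : Matrix S S ℝ) : Prop :=
  (∀ y x, 0 ≤ G y x) ∧ ∀ x, ∑ y, G y x = 1

/-- `prodG G t t0 = G (t-1) * G (t-2) * ⋯ * G t0`. -/
noncomputable def prodG [Fintype S] [DecidableEq S] (G : ℕ → Matrix S S ℝ) (t t0 : ℕ) :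
    Matrix S S ℝ :=
  (((List.range (t - t0)).map fun k => G (t0 + k)).reverse).prod

/-- Weak ergodicity: the distribution forgets its initial condition. -/
def WeaklyErgodic [Fintype S] [DecidableEq S] (G : ℕ → Matrix S S ℝ) : Prop :=
  ∀ t0 : ℕ, ∀ ε > (0 : ℝ), ∃ T : ℕ, ∀ t ≥ T,
    ∀ p0 p0' : S → ℝ, IsProbVec p0 → IsProbVec p0' →
      dist1 ((prodG G t t0).mulVec p0) ((prodG G t t0).mulVec p0') ≤ ε

/-- Strong ergodicity towards a fixed distribution `r`. -/
def StronglyErgodicTo [Fintype S] [DecidableEq S] (G : ℕ → Matrix S S ℝ) (r : S → ℝ) : Prop :=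
  ∀ t0 : ℕ, ∀ ε > (0 : ℝ), ∃ T : ℕ, ∀ t ≥ T,
    ∀ p0 : S → ℝ, IsProbVec p0 → dist1 ((prodG G t t0).mulVec p0) r ≤ ε

/-- Strong ergodicity. -/
def StronglyErgodic [Fintype S] [DecidableEq S] (G : ℕ → Matrix S S ℝ) : Prop :=
  ∃ r : S → ℝ, IsProbVec r ∧ StronglyErgodicTo G r

/-- The coefficient of ergodicity `α(G)`. -/
noncomputable def ergCoeff [Fintype S] [Nonempty S] (G : Matrix S S ℝ) : ℝ :=
  1 - Finset.univ.inf' Finset.univ_nonempty fun p : S × S => ∑ z, min (G z p.1) (G z p.2)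

/-- A generation probability: symmetric, vanishing on the diagonal, columns summing
to one, and irreducible. -/
structure IsGenProb [Fintype S] (P : S → S → ℝ) : Prop where
  symm : ∀ x y, P y x = P x y
  nonneg : ∀ x y, 0 ≤ P y x
  diag_zero : ∀ x, P x x = 0
  sum_one : ∀ x, ∑ y, P y x = 1
  irreducible : ∀ x y : S, ∃ n > 0, ∃ z : ℕ → S,
    z 0 = x ∧ z n = y ∧ ∀ k < n, 0 < P (z (k + 1)) (z k)

/-- An acceptance function: monotone increasing, valued in `[0,1]`,
with `g (1/u) = g u / u`. -/
structure IsAcceptFn (g : ℝ → ℝ) : Prop where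
  mono : MonotoneOn g (Set.Ici (0 : ℝ))
  maps : ∀ u : ℝ, 0 ≤ u → g u ∈ Set.Icc (0 : ℝ) 1
  ratio : ∀ u : ℝ, 0 < u → g (1 / u) = g u / u

/-- Partition function `Z(t)`. -/
noncomputable def Zfun [Fintype S] (F0 F1 : S → ℝ) (T0 : ℝ) (T1 : ℕ → ℝ) (t : ℕ) : ℝ :=
  ∑ x, Real.exp (-(F0 x) / T0 - F1 x / T1 t)

/-- Time-dependent Boltzmann distribution `q(x;t)`. -/
noncomputable def qB [Fintype S] (F0 F1 : S → ℝ) (T0 : ℝ) (T1 : ℕ → ℝ) (t : ℕ) (x : S) : ℝ :=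
  Real.exp (-(F0 x) / T0 - F1 x / T1 t) / Zfun F0 F1 T0 T1 t

/-- Transition matrix built from a generation probability `P` and an
acceptance probability `A`. -/
noncomputable def GmatOf [Fintype S] [DecidableEq S] (P : S → S → ℝ) (A : ℕ → S → S → ℝ)
    (t : ℕ) : Matrix S S ℝ :=
  Matrix.of fun y x => if y = x then 1 - ∑ z, P z x * A t z x else P y x * A t y x

/-- Transition matrix of path-integral Monte Carlo quantum annealing. -/
noncomputable def Gpimc [Fintype S] [DecidableEq S] (P : S → S → ℝ) (g : ℝ → ℝ)
    (F0 F1 : S → ℝ) (T0 : ℝ) (T1 : ℕ → ℝ) : ℕ → Matrix S S ℝ :=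
  GmatOf P fun t y x => g (qB F0 F1 T0 T1 t y / qB F0 F1 T0 T1 t x)

/-- The set `S_m` of local maxima of `F1` with respect to `P`. -/
def Sm [Fintype S] (P : S → S → ℝ) (F1 : S → ℝ) : Set S :=
  {x | ∀ y, 0 < P y x → F1 y ≤ F1 x}

/-- `x` can reach `y` in exactly `n` elementary transitions. -/
def ReachIn (P : S → S → ℝ) (n : ℕ) (x y : S) : Prop :=
  ∃ f : ℕ → S, f 0 = x ∧ f n = y ∧ ∀ k < n, 0 < P (f (k + 1)) (f k)

/-- `d(y,x)`: the minimum number of transitions needed to go from `x` to `y`. -/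
noncomputable def dSteps (P : S → S → ℝ) (x y : S) : ℕ :=
  sInf {n | ReachIn P n x y}

/-- `R = min { max { d(y,x) | y ∈ S } | x ∈ S \ S_m }`. -/
noncomputable def Rnum [Fintype S] (P : S → S → ℝ) (F1 : S → ℝ) : ℕ :=
  sInf {r | ∃ x, x ∉ Sm P F1 ∧ r = Finset.univ.sup fun y => dSteps P x y}

/-- The maximum change of `F` in a single transition. -/
noncomputable def Lmax [Fintype S] (P : S → S → ℝ) (F : S → ℝ) : ℝ :=
  sSup {v | ∃ x y : S, 0 < P y x ∧ v = |F x - F y|}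

/-- The minimum nonvanishing value of the generation probability. -/
noncomputable def wmin [Fintype S] (P : S → S → ℝ) : ℝ :=
  sInf {v | ∃ x y : S, 0 < P y x ∧ v = P y x}

/-- The set of global minima of `F1`. -/
def S1min [Fintype S] (F1 : S → ℝ) : Set S := {x | ∀ y, F1 x ≤ F1 y}

/-- The limiting distribution: proportional to `exp (-F0 x / T0)` on the set of
global minima of `F1`, and zero elsewhere. -/
noncomputable def rLimit [Fintype S] (F0 F1 : S → ℝ) (T0 : ℝ) (x : S) : ℝ :=
  if ∀ y, F1 x ≤ F1 y then
    Real.exp (-(F0 x) / T0) /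
      ∑ y ∈ Finset.univ.filter (fun y => ∀ z, F1 y ≤ F1 z), Real.exp (-(F0 y) / T0)
  else 0

/-- The ±1 value of a Boolean spin. -/
noncomputable def spin (b : Bool) : ℝ := if b then 1 else -1

/-- Classical Ising energy `E0(x) = -∑_{i<j} J_ij x_i x_j`. -/
noncomputable def E0def (N : ℕ) (J : Fin N → Fin N → ℝ) (x : Fin N → Bool) : ℝ :=
  -∑ p ∈ Finset.univ.filter (fun p : Fin N × Fin N => p.1 < p.2),
    J p.1 p.2 * spin (x p.1) * spin (x p.2)

/-- Hamming distance between spin configurations. -/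
def hamming (N : ℕ) (x y : Fin N → Bool) : ℕ :=
  (Finset.univ.filter fun i => x i ≠ y i).card

/-- GFMC weight `w(x;t) = 1 - Δt (E0(x) - E_T) + N Δt Γ(t)`. -/
noncomputable def wgt (N : ℕ) (J : Fin N → Fin N → ℝ) (Δt ET : ℝ) (Γ : ℕ → ℝ) (t : ℕ)
    (x : Fin N → Bool) : ℝ :=
  1 - Δt * (E0def N J x - ET) + N * Δt * Γ t

/-- The normalized GFMC transition probability `G1(y,x;t)`. -/
noncomputable def G1mat (N : ℕ) (J : Fin N → Fin N → ℝ) (Δt ET : ℝ) (Γ : ℕ → ℝ) (t : ℕ) :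
    Matrix (Fin N → Bool) (Fin N → Bool) ℝ :=
  Matrix.of fun y x =>
    if y = x then 1 - N * Δt * Γ t / wgt N J Δt ET Γ t x
    else if hamming N x y = 1 then Δt * Γ t / wgt N J Δt ET Γ t x
    else 0

/-- `E_min = min { E0(x) | x ∈ S }`. -/
noncomputable def Emin (N : ℕ) (J : Fin N → Fin N → ℝ) : ℝ :=
  Finset.univ.inf' Finset.univ_nonempty (E0def N J)

/-- Stationary distribution `q(x;t) = w(x;t) / ∑_y w(y;t)` of GFMC. -/
noncomputable def qGFMC (N : ℕ) (J : Fin N → Fin N → ℝ) (Δt ET : ℝ) (Γ : ℕ → ℝ) (t : ℕ)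
    (x : Fin N → Bool) : ℝ :=
  wgt N J Δt ET Γ t x / ∑ y, wgt N J Δt ET Γ t y

/-- The alternative GFMC transition probability `G2(y,x;t)`. -/
noncomputable def G2mat (N : ℕ) (Δt : ℝ) (Γ : ℕ → ℝ) (t : ℕ) :
    Matrix (Fin N → Bool) (Fin N → Bool) ℝ :=
  Matrix.of fun y x =>
    (Real.cosh (Δt * Γ t) * Real.exp (-(Δt * Γ t))) ^ N *
      Real.tanh (Δt * Γ t) ^ hamming N x y

/-- Inverse hyperbolic tangent. -/
noncomputable def artanh (x : ℝ) : ℝ := (1 / 2) * Real.log ((1 + x) / (1 - x))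

/-- The cost function of the Suzuki–Trotter representation of the TFIM:
`F0(x) = -(β/M) ∑_k ∑_{ij} J_ij S_i^(k) S_j^(k)`. -/
noncomputable def F0tfim (N M : ℕ) (β : ℝ) (J : Fin (N + 1) → Fin (N + 1) → ℝ)
    (x : Fin (N + 1) × Fin M → Bool) : ℝ :=
  -(β / M) * ∑ k : Fin M, ∑ i : Fin (N + 1), ∑ j : Fin (N + 1),
    J i j * spin (x (i, k)) * spin (x (j, k))

/-- The kinetic term of the Suzuki–Trotter representation of the TFIM:
`F1(x) = -∑_k ∑_i S_i^(k) S_i^(k+1)` with periodic boundary along the Trotter direction. -/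
noncomputable def F1tfim (N M : ℕ) [NeZero M] (x : Fin (N + 1) × Fin M → Bool) : ℝ :=
  -∑ k : Fin M, ∑ i : Fin (N + 1), spin (x (i, k)) * spin (x (i, k + 1))

/-- The ferromagnetic coupling `γ(t) = (1/2) log coth (β Γ(t) / M)` between Trotter slices. -/
noncomputable def γtfim (M : ℕ) (β : ℝ) (Γ : ℕ → ℝ) (t : ℕ) : ℝ :=
  (1 / 2) * Real.log (1 / Real.tanh (β * Γ t / M))

/-- Tsallis-type generalized acceptance ratio `u(y,x;t)`. -/
noncomputable def uGen {S : Type*} (F0 F1 : S → ℝ) (T0 : ℝ) (T1 : ℕ → ℝ) (qp : ℝ) (t : ℕ)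
    (y x : S) : ℝ :=
  Real.exp (-(F0 y - F0 x) / T0) *
    (1 + (qp - 1) * (F1 y - F1 x) / T1 t) ^ (1 / (1 - qp))


section Aux
set_option linter.unusedSectionVars false
variable {S : Type*} [Fintype S] [DecidableEq S]

lemma isStochastic_one : IsStochastic (1 : Matrix S S ℝ) := by
  constructor
  · intro y x
    by_cases h : y = x <;> simp [Matrix.one_apply, h]
  · intro x
    simp [Matrix.one_apply]

lemma IsStochastic.mul {A B : Matrix S S ℝ} (hA : IsStochastic A) (hB : IsStochastic B) :
    IsStochastic (A * B) := by
  constructor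
  · intro y x
    exact Finset.sum_nonneg fun z _ => mul_nonneg (hA.1 y z) (hB.1 z x)
  · intro x
    calc ∑ y, (A * B) y x = ∑ y, ∑ z, A y z * B z x := by simp [Matrix.mul_apply]
    _ = ∑ z, (∑ y, A y z) * B z x := by rw [Finset.sum_comm]; simp [Finset.sum_mul]
    _ = ∑ z, B z x := by simp [hA.2]
    _ = 1 := hB.2 x

lemma prodG_self (G : ℕ → Matrix S S ℝ) (t : ℕ) : prodG G t t = 1 := by
  simp [prodG]

lemma prodG_succ (G : ℕ → Matrix S S ℝ) {t t0 : ℕ} (h : t0 ≤ t) :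
    prodG G (t + 1) t0 = G t * prodG G t t0 := by
  unfold prodG
  have h1 : t + 1 - t0 = (t - t0) + 1 := by omega
  rw [h1, List.range_succ, List.map_append, List.reverse_append]
  simp only [List.map_cons, List.map_nil, List.reverse_cons, List.reverse_nil,
    List.nil_append, List.prod_cons]
  rw [List.singleton_append, List.prod_cons, Nat.add_sub_cancel' h]

lemma prodG_comp (G : ℕ → Matrix S S ℝ) {t s t0 : ℕ} (h1 : t0 ≤ s) (h2 : s ≤ t) :
    prodG G t t0 = prodG G t s * prodG G s t0 := by
  induction t, h2 using Nat.le_induction with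
  | base => rw [prodG_self]; simp
  | succ t ht ih =>
      rw [prodG_succ G (le_trans h1 ht), prodG_succ G ht, ih, Matrix.mul_assoc]

lemma prodG_stochastic {G : ℕ → Matrix S S ℝ} (hG : ∀ t, IsStochastic (G t))
    (t t0 : ℕ) : IsStochastic (prodG G t t0) := by
  by_cases h : t0 ≤ t
  · induction t, h using Nat.le_induction with
    | base => rw [prodG_self]; exact isStochastic_one
    | succ t ht ih => rw [prodG_succ G ht]; exact (hG t).mul ih
  · unfold prodG
    rw [Nat.sub_eq_zero_of_le (by omega)]
    simpa using isStochastic_one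

lemma sum_mulVec {M : Matrix S S ℝ} (hM : IsStochastic M) (v : S → ℝ) :
    ∑ z, M.mulVec v z = ∑ x, v x := by
  simp only [Matrix.mulVec, dotProduct]
  rw [Finset.sum_comm]
  simp only [← Finset.sum_mul]
  simp [hM.2]

end Aux

section Erg
set_option linter.unusedSectionVars false
variable {S : Type*} [Fintype S] [DecidableEq S] [Nonempty S]

lemma ergCoeff_nonneg {M : Matrix S S ℝ} (hM : IsStochastic M) : 0 ≤ ergCoeff M := by
  unfold ergCoeff
  have h := Finset.inf'_le (fun p : S × S => ∑ z, min (M z p.1) (M z p.2))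
    (Finset.mem_univ (Classical.arbitrary (S × S)))
  have h2 : ∑ z, min (M z (Classical.arbitrary (S × S)).1) (M z (Classical.arbitrary (S × S)).2)
      ≤ 1 := by
    calc _ ≤ ∑ z, M z (Classical.arbitrary (S × S)).1 :=
          Finset.sum_le_sum fun z _ => min_le_left _ _
    _ = 1 := hM.2 _
  linarith

lemma ergCoeff_le_one {M : Matrix S S ℝ} (hM : IsStochastic M) : ergCoeff M ≤ 1 := by
  unfold ergCoeff
  have : (0:ℝ) ≤ univ.inf' univ_nonempty fun p : S × S => ∑ z, min (M z p.1) (M z p.2) := by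
    apply Finset.le_inf'
    intro p _
    exact Finset.sum_nonneg fun z _ => le_min (hM.1 z p.1) (hM.1 z p.2)
  linarith

lemma abs_sub_eq_key (a b : ℝ) : |a - b| = a + b - 2 * min a b := by
  rcases le_total a b with h | h
  · rw [abs_of_nonpos (by linarith), min_eq_left h]; ring
  · rw [abs_of_nonneg (by linarith), min_eq_right h]; ring

lemma col_dist_le {M : Matrix S S ℝ} (hM : IsStochastic M) (x y : S) :
    ∑ z, |M z x - M z y| ≤ 2 * ergCoeff M := by
  rw [Finset.sum_congr rfl fun z _ => abs_sub_eq_key (M z x) (M z y)]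
  rw [Finset.sum_sub_distrib, Finset.sum_add_distrib, hM.2 x, hM.2 y, ← Finset.mul_sum]
  have h : univ.inf' univ_nonempty (fun p : S × S => ∑ z, min (M z p.1) (M z p.2))
      ≤ ∑ z, min (M z x) (M z y) := Finset.inf'_le _ (Finset.mem_univ (x, y))
  unfold ergCoeff
  linarith

lemma exists_col_dist_eq (M : Matrix S S ℝ) (hM : IsStochastic M) :
    ∃ x y : S, ∑ z, |M z x - M z y| = 2 * ergCoeff M := by
  obtain ⟨p, _, hp⟩ := Finset.exists_mem_eq_inf' (univ_nonempty (α := S × S))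
    (fun p : S × S => ∑ z, min (M z p.1) (M z p.2))
  refine ⟨p.1, p.2, ?_⟩
  rw [Finset.sum_congr rfl fun z _ => abs_sub_eq_key (M z p.1) (M z p.2)]
  rw [Finset.sum_sub_distrib, Finset.sum_add_distrib, hM.2 p.1, hM.2 p.2, ← Finset.mul_sum]
  unfold ergCoeff
  rw [hp]
  ring

lemma contraction {M : Matrix S S ℝ} (hM : IsStochastic M) (v : S → ℝ)
    (hv : ∑ x, v x = 0) :
    ∑ z, |M.mulVec v z| ≤ ergCoeff M * ∑ x, |v x| := by
  set vp : S → ℝ := fun x => max (v x) 0 with hvp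
  set vn : S → ℝ := fun x => max (-v x) 0 with hvn
  have hpnonneg : ∀ x, 0 ≤ vp x := fun x => le_max_right _ _
  have hnnonneg : ∀ x, 0 ≤ vn x := fun x => le_max_right _ _
  have hsub : ∀ x, vp x - vn x = v x := by
    intro x; simp only [hvp, hvn]
    rcases le_total (v x) 0 with h | h
    · rw [max_eq_right h, max_eq_left (by linarith)]; ring
    · rw [max_eq_left h, max_eq_right (by linarith)]; ring
  have habs : ∀ x, vp x + vn x = |v x| := by
    intro x; simp only [hvp, hvn]
    rcases le_total (v x) 0 with h | h
    · rw [max_eq_right h, max_eq_left (by linarith), abs_of_nonpos h]; ring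
    · rw [max_eq_left h, max_eq_right (by linarith), abs_of_nonneg h]; ring
  set c : ℝ := ∑ x, vp x with hc
  have hcn : ∑ x, vn x = c := by
    have : ∑ x, (vp x - vn x) = 0 := by rw [Finset.sum_congr rfl fun x _ => hsub x, hv]
    rw [Finset.sum_sub_distrib] at this
    linarith
  have hsumabs : ∑ x, |v x| = 2 * c := by
    rw [← Finset.sum_congr rfl fun x _ => habs x, Finset.sum_add_distrib, hcn]; ring
  have hcnn : 0 ≤ c := Finset.sum_nonneg fun x _ => hpnonneg x
  rcases eq_or_lt_of_le hcnn with hc0 | hcpos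
  · -- c = 0, so v = 0
    have hv0 : v = 0 := by
      funext x
      have h0 : ∑ x, |v x| = 0 := by rw [hsumabs, ← hc0]; ring
      have := (Finset.sum_eq_zero_iff_of_nonneg (fun x _ => abs_nonneg (v x))).mp h0 x
        (Finset.mem_univ x)
      exact abs_eq_zero.mp this
    rw [hv0]
    simp [Matrix.mulVec_zero]
  have key : ∀ z, M.mulVec v z = c⁻¹ * ∑ x, ∑ y, vp x * vn y * (M z x - M z y) := by
    intro z
    have e1 : ∑ x, ∑ y, vp x * vn y * (M z x - M z y)
        = (∑ x, vp x * M z x) * (∑ y, vn y) - (∑ x, vp x) * (∑ y, vn y * M z y) := by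
      rw [Finset.sum_mul_sum, Finset.sum_mul_sum, ← Finset.sum_sub_distrib]
      apply Finset.sum_congr rfl; intro x _
      rw [← Finset.sum_sub_distrib]
      apply Finset.sum_congr rfl; intro y _
      ring
    rw [e1, hcn, ← hc]
    have e2 : M.mulVec v z = ∑ x, (vp x - vn x) * M z x := by
      simp only [Matrix.mulVec, dotProduct]
      apply Finset.sum_congr rfl; intro x _
      rw [hsub x]; ring
    rw [e2]
    simp only [sub_mul]
    rw [Finset.sum_sub_distrib]
    field_simp
  calc ∑ z, |M.mulVec v z|
      ≤ ∑ z, c⁻¹ * ∑ x, ∑ y, vp x * vn y * |M z x - M z y| := by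
        apply Finset.sum_le_sum; intro z _
        rw [key z, abs_mul, abs_of_nonneg (inv_nonneg.mpr hcnn)]
        apply mul_le_mul_of_nonneg_left _ (inv_nonneg.mpr hcnn)
        refine (Finset.abs_sum_le_sum_abs _ _).trans (Finset.sum_le_sum fun x _ => ?_)
        refine (Finset.abs_sum_le_sum_abs _ _).trans (Finset.sum_le_sum fun y _ => ?_)
        rw [abs_mul, abs_mul, abs_of_nonneg (hpnonneg x), abs_of_nonneg (hnnonneg y)]
    _ = c⁻¹ * ∑ x, ∑ y, vp x * vn y * (∑ z, |M z x - M z y|) := by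
        rw [← Finset.mul_sum]
        congr 1
        rw [Finset.sum_comm]
        apply Finset.sum_congr rfl; intro x _
        rw [Finset.sum_comm]
        apply Finset.sum_congr rfl; intro y _
        rw [Finset.mul_sum]
    _ ≤ c⁻¹ * ∑ x, ∑ y, vp x * vn y * (2 * ergCoeff M) := by
        apply mul_le_mul_of_nonneg_left _ (inv_nonneg.mpr hcnn)
        apply Finset.sum_le_sum; intro x _
        apply Finset.sum_le_sum; intro y _
        exact mul_le_mul_of_nonneg_left (col_dist_le hM x y)
          (mul_nonneg (hpnonneg x) (hnnonneg y))
    _ = ergCoeff M * ∑ x, |v x| := by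
        have hkey2 : ∑ x, ∑ y, vp x * vn y * (2 * ergCoeff M)
            = c * (c * (2 * ergCoeff M)) := by
          simp only [mul_assoc, ← Finset.mul_sum]
          rw [← Finset.sum_mul, ← Finset.sum_mul, hcn]
        rw [hkey2, hsumabs]
        field_simp

end Erg

section Main
set_option linter.unusedSectionVars false
variable {S : Type*} [Fintype S] [DecidableEq S] [Nonempty S]

lemma dist1_le_two (p p' : S → ℝ) (hp : IsProbVec p) (hp' : IsProbVec p') :
    dist1 p p' ≤ 2 := by
  unfold dist1
  calc ∑ x, |p x - p' x| ≤ ∑ x, (p x + p' x) := by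
        apply Finset.sum_le_sum; intro x _
        have h1 := hp.1 x; have h2 := hp'.1 x
        rw [abs_sub_le_iff]; constructor <;> linarith
    _ = 2 := by rw [Finset.sum_add_distrib, hp.2, hp'.2]; norm_num

lemma prod_le_exp (s : Finset ℕ) (f : ℕ → ℝ) (h : ∀ i ∈ s, 0 ≤ f i) :
    ∏ i ∈ s, f i ≤ Real.exp (∑ i ∈ s, (f i - 1)) := by
  rw [Real.exp_sum]
  apply Finset.prod_le_prod h
  intro i _
  have := Real.add_one_le_exp (f i - 1)
  linarith

lemma chainBound {G : ℕ → Matrix S S ℝ} (hG : ∀ t, IsStochastic (G t))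
    {ts : ℕ → ℕ} (hts : StrictMono ts) (m : ℕ) (v : S → ℝ) (hv : ∑ x, v x = 0)
    {n : ℕ} (hn : m ≤ n) :
    ∑ z, |(prodG G (ts n) (ts m)).mulVec v z| ≤
      (∏ i ∈ Finset.Ico m n, ergCoeff (prodG G (ts (i + 1)) (ts i))) * ∑ x, |v x| := by
  induction n, hn using Nat.le_induction with
  | base => simp [prodG_self, Matrix.one_mulVec, Finset.Ico_self]
  | succ n hn ih =>
      have hsw : ∑ z, (prodG G (ts n) (ts m)).mulVec v z = 0 := by
        rw [sum_mulVec (prodG_stochastic hG _ _), hv]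
      rw [prodG_comp G (hts.monotone hn) (hts.monotone (Nat.le_succ n)),
        ← Matrix.mulVec_mulVec]
      calc ∑ z, |(prodG G (ts (n + 1)) (ts n)).mulVec
              ((prodG G (ts n) (ts m)).mulVec v) z|
          ≤ ergCoeff (prodG G (ts (n + 1)) (ts n)) *
              ∑ z, |(prodG G (ts n) (ts m)).mulVec v z| :=
            contraction (prodG_stochastic hG _ _) _ hsw
        _ ≤ ergCoeff (prodG G (ts (n + 1)) (ts n)) *
              ((∏ i ∈ Finset.Ico m n, ergCoeff (prodG G (ts (i + 1)) (ts i))) * ∑ x, |v x|) :=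
            mul_le_mul_of_nonneg_left ih (ergCoeff_nonneg (prodG_stochastic hG _ _))
        _ = (∏ i ∈ Finset.Ico m (n + 1), ergCoeff (prodG G (ts (i + 1)) (ts i))) * ∑ x, |v x| := by
            rw [Finset.prod_Ico_succ_top hn]; ring

end Main


/-- Condition for weak ergodicity.  An inhomogeneous Markov chain on a
nonempty finite state space is weakly ergodic if and only if there is a strictly
increasing sequence of times `t_0 < t_1 < …` such that
`∑ᵢ (1 - α(G^{t_{i+1}, t_i}))` diverges. -/
theorem weaklyErgodic_iff_sum_ergCoeff_diverges
    {S : Type*} [Fintype S] [DecidableEq S] [Nonempty S]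
    (G : ℕ → Matrix S S ℝ) (hG : ∀ t, IsStochastic (G t)) :
    WeaklyErgodic G ↔
      ∃ ts : ℕ → ℕ, StrictMono ts ∧
        Tendsto (fun n => ∑ i ∈ Finset.range n,
          (1 - ergCoeff (prodG G (ts (i + 1)) (ts i)))) atTop atTop := by
  constructor
  · -- Forward: weak ergodicity gives a sequence with divergent sum
    intro hWE
    have H : ∀ t0 : ℕ, ∃ T : ℕ, ∀ t ≥ T, ergCoeff (prodG G t t0) ≤ 1 / 2 := by
      intro t0
      obtain ⟨T, hT⟩ := hWE t0 1 one_pos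
      refine ⟨T, fun t ht => ?_⟩
      obtain ⟨x, y, hxy⟩ := exists_col_dist_eq (prodG G t t0) (prodG_stochastic hG t t0)
      have hpx : IsProbVec (Pi.single x 1 : S → ℝ) := by
        constructor
        · intro w; by_cases h : w = x <;> simp [Pi.single_apply, h]
        · simp [Pi.single_apply]
      have hpy : IsProbVec (Pi.single y 1 : S → ℝ) := by
        constructor
        · intro w; by_cases h : w = y <;> simp [Pi.single_apply, h]
        · simp [Pi.single_apply]
      have h1 := hT t ht _ _ hpx hpy
      have h2 : dist1 ((prodG G t t0).mulVec (Pi.single x 1))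
          ((prodG G t t0).mulVec (Pi.single y 1))
          = ∑ z, |prodG G t t0 z x - prodG G t t0 z y| := by
        unfold dist1
        apply Finset.sum_congr rfl; intro z _
        congr 1
        simp [Matrix.mulVec_single]
      rw [h2, hxy] at h1
      linarith
    choose Tf hTf using H
    set ts : ℕ → ℕ := fun n => Nat.rec 0 (fun _ prev => max (Tf prev) prev + 1) n with hts_def
    have hts_succ : ∀ n, ts (n + 1) = max (Tf (ts n)) (ts n) + 1 := fun n => rfl
    have hmono : StrictMono ts := strictMono_nat_of_lt_succ fun n => by rw [hts_succ]; omega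
    refine ⟨ts, hmono, ?_⟩
    have hbound : ∀ n, (1 : ℝ) / 2 ≤ 1 - ergCoeff (prodG G (ts (n + 1)) (ts n)) := by
      intro n
      have := hTf (ts n) (ts (n + 1)) (by rw [hts_succ]; omega)
      linarith
    have hlow : ∀ n : ℕ, (n : ℝ) * (1 / 2) ≤
        ∑ i ∈ Finset.range n, (1 - ergCoeff (prodG G (ts (i + 1)) (ts i))) := by
      intro n
      calc (n : ℝ) * (1 / 2) = ∑ _i ∈ Finset.range n, (1 / 2 : ℝ) := by
            simp [mul_comm]
      _ ≤ _ := Finset.sum_le_sum fun i _ => hbound i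
    exact tendsto_atTop_mono hlow
      (Tendsto.atTop_mul_const (by norm_num : (0:ℝ) < 1 / 2) tendsto_natCast_atTop_atTop)
  · -- Backward: divergent sum gives weak ergodicity
    rintro ⟨ts, hts, hdiv⟩
    intro t0 ε hε
    set α : ℕ → ℝ := fun i => ergCoeff (prodG G (ts (i + 1)) (ts i)) with hα
    obtain ⟨n, hn1, hn2⟩ :=
      ((hdiv.eventually_ge_atTop
          (∑ i ∈ Finset.range t0, (1 - α i) + Real.log (2 / ε))).and
        (eventually_ge_atTop t0)).exists
    refine ⟨ts n, fun t ht p p' hp hp' => ?_⟩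
    have h1 : ts t0 ≤ ts n := hts.monotone hn2
    have h0 : t0 ≤ ts t0 := hts.le_apply
    have hdec : prodG G t t0
        = prodG G t (ts n) * (prodG G (ts n) (ts t0) * prodG G (ts t0) t0) := by
      rw [← prodG_comp G h0 h1, ← prodG_comp G (h0.trans h1) ht]
    set v : S → ℝ := fun x => p x - p' x with hvdef
    have hv : ∑ x, v x = 0 := by
      simp only [hvdef]
      rw [Finset.sum_sub_distrib, hp.2, hp'.2]
      ring
    have hdist : dist1 ((prodG G t t0).mulVec p) ((prodG G t t0).mulVec p')
        = ∑ z, |(prodG G t t0).mulVec v z| := by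
      unfold dist1
      apply Finset.sum_congr rfl; intro z _
      congr 1
      have : v = p - p' := by funext x; simp [hvdef]
      rw [this, Matrix.mulVec_sub]
      simp
    rw [hdist, hdec]
    -- abbreviations
    set v1 : S → ℝ := (prodG G (ts t0) t0).mulVec v with hv1
    have hv1sum : ∑ x, v1 x = 0 := by rw [hv1, sum_mulVec (prodG_stochastic hG _ _), hv]
    have hv1norm : ∑ x, |v1 x| ≤ 2 := by
      have hc := contraction (prodG_stochastic hG (ts t0) t0) v hv
      have hub : ∑ x, |v x| ≤ 2 := dist1_le_two p p' hp hp'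
      have hα1 := ergCoeff_le_one (prodG_stochastic hG (ts t0) t0)
      have hα0 := ergCoeff_nonneg (prodG_stochastic hG (ts t0) t0)
      have hnn : (0:ℝ) ≤ ∑ x, |v x| := Finset.sum_nonneg fun x _ => abs_nonneg _
      calc ∑ x, |v1 x| ≤ ergCoeff (prodG G (ts t0) t0) * ∑ x, |v x| := hc
        _ ≤ 1 * 2 := by
            apply mul_le_mul hα1 hub hnn
            norm_num
        _ = 2 := by norm_num
    set v2 : S → ℝ := (prodG G (ts n) (ts t0)).mulVec v1 with hv2
    have hv2sum : ∑ x, v2 x = 0 := by rw [hv2, sum_mulVec (prodG_stochastic hG _ _), hv1sum]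
    have hprodnn : (0:ℝ) ≤ ∏ i ∈ Finset.Ico t0 n, α i :=
      Finset.prod_nonneg fun i _ => ergCoeff_nonneg (prodG_stochastic hG _ _)
    have hv2norm : ∑ x, |v2 x| ≤ (∏ i ∈ Finset.Ico t0 n, α i) * 2 := by
      calc ∑ x, |v2 x| ≤ (∏ i ∈ Finset.Ico t0 n, α i) * ∑ x, |v1 x| :=
            chainBound hG hts t0 v1 hv1sum hn2
        _ ≤ (∏ i ∈ Finset.Ico t0 n, α i) * 2 :=
            mul_le_mul_of_nonneg_left hv1norm hprodnn
    have hprod_le : ∏ i ∈ Finset.Ico t0 n, α i ≤ ε / 2 := by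
      have hstep := prod_le_exp (Finset.Ico t0 n) α
        (fun i _ => ergCoeff_nonneg (prodG_stochastic hG _ _))
      have hsum : ∑ i ∈ Finset.Ico t0 n, (α i - 1)
          = -(∑ i ∈ Finset.range n, (1 - α i) - ∑ i ∈ Finset.range t0, (1 - α i)) := by
        rw [← Finset.sum_Ico_eq_sub _ hn2]
        rw [← Finset.sum_neg_distrib]
        apply Finset.sum_congr rfl; intro i _; ring
      have hlog : Real.log (2 / ε) ≤
          ∑ i ∈ Finset.range n, (1 - α i) - ∑ i ∈ Finset.range t0, (1 - α i) := by
        linarith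
      calc ∏ i ∈ Finset.Ico t0 n, α i
          ≤ Real.exp (∑ i ∈ Finset.Ico t0 n, (α i - 1)) := hstep
        _ ≤ Real.exp (-Real.log (2 / ε)) := by
            rw [hsum]
            apply Real.exp_le_exp.mpr
            linarith
        _ = ε / 2 := by
            rw [Real.exp_neg, Real.exp_log (by positivity)]
            rw [inv_div]
    -- final assembly
    have hfin : ∑ z, |(prodG G t (ts n) * (prodG G (ts n) (ts t0) * prodG G (ts t0) t0)).mulVec v z|
        ≤ ∑ x, |v2 x| := by
      rw [← Matrix.mulVec_mulVec, ← Matrix.mulVec_mulVec, ← hv1, ← hv2]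
      have hc := contraction (prodG_stochastic hG t (ts n)) v2 hv2sum
      have hα1 := ergCoeff_le_one (prodG_stochastic hG t (ts n))
      have hnn : (0:ℝ) ≤ ∑ x, |v2 x| := Finset.sum_nonneg fun x _ => abs_nonneg _
      calc ∑ z, |(prodG G t (ts n)).mulVec v2 z|
          ≤ ergCoeff (prodG G t (ts n)) * ∑ x, |v2 x| := hc
        _ ≤ 1 * ∑ x, |v2 x| := mul_le_mul_of_nonneg_right hα1 hnn
        _ = ∑ x, |v2 x| := by ring
    calc ∑ z, |(prodG G t (ts n) * (prodG G (ts n) (ts t0) * prodG G (ts t0) t0)).mulVec v z|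
        ≤ ∑ x, |v2 x| := hfin
      _ ≤ (∏ i ∈ Finset.Ico t0 n, α i) * 2 := hv2norm
      _ ≤ (ε / 2) * 2 := mul_le_mul_of_nonneg_right hprod_le (by norm_num)
      _ = ε := by ring


end QAPaper
end

section
/- For the inhomogeneous Markov chain of path-integral Monte Carlo quantum annealing, for all states x, y with P(y,x) > 0 and all times t > 0, the transition probability satisfies G(y,x;t) ≥ w · g(1) · exp(−L0/T0 − L1/T1(t)). -/
open Finset Filter

namespace QAPaper

variable {S : Type*}

lemma Lmax_set_finite [Fintype S] (P : S → S → ℝ) (F : S → ℝ) :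
    {v | ∃ x y : S, 0 < P y x ∧ v = |F x - F y|}.Finite := by
  apply Set.Finite.subset (Set.finite_range fun p : S × S => |F p.1 - F p.2|)
  rintro v ⟨x, y, -, rfl⟩; exact ⟨(x, y), rfl⟩

lemma abs_le_Lmax [Fintype S] {P : S → S → ℝ} (F : S → ℝ) {x y : S} (h : 0 < P y x) :
    |F x - F y| ≤ Lmax P F := by
  apply le_csSup (Lmax_set_finite P F).bddAbove
  exact ⟨x, y, h, rfl⟩

lemma Lmax_nonneg [Fintype S] {P : S → S → ℝ} (F : S → ℝ) {x y : S} (h : 0 < P y x) :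
    0 ≤ Lmax P F :=
  (abs_nonneg _).trans (abs_le_Lmax F h)

lemma wmin_le [Fintype S] {P : S → S → ℝ} {x y : S} (h : 0 < P y x) :
    wmin P ≤ P y x := by
  have hmem : P y x ∈ {v | ∃ x y : S, 0 < P y x ∧ v = P y x} := ⟨x, y, h, rfl⟩
  apply csInf_le _ hmem
  apply Set.Finite.bddBelow
  apply Set.Finite.subset (Set.finite_range fun p : S × S => P p.2 p.1)
  rintro v ⟨a, b, -, rfl⟩; exact ⟨(a, b), rfl⟩

lemma wmin_nonneg [Fintype S] {P : S → S → ℝ} {x y : S} (h : 0 < P y x) :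
    0 ≤ wmin P := by
  have hne : {v | ∃ x y : S, 0 < P y x ∧ v = P y x}.Nonempty := ⟨P y x, x, y, h, rfl⟩
  apply le_csInf hne
  rintro v ⟨a, b, hab, rfl⟩; exact hab.le

lemma accept_lower {g : ℝ → ℝ} (hg : IsAcceptFn g) {r c : ℝ} (hr : 0 < r)
    (hc : 0 ≤ c) (hrc : Real.exp (-c) ≤ r) : g 1 * Real.exp (-c) ≤ g r := by
  have hg1 : 0 ≤ g 1 := (hg.maps 1 one_pos.le).1
  rcases le_or_gt 1 r with h1 | h1
  · calc g 1 * Real.exp (-c) ≤ g 1 * 1 := by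
          exact mul_le_mul_of_nonneg_left (Real.exp_le_one_iff.2 (neg_nonpos.2 hc)) hg1
    _ = g 1 := mul_one _
    _ ≤ g r := hg.mono (Set.mem_Ici.2 one_pos.le) (Set.mem_Ici.2 hr.le) h1
  · have hinv : (1 : ℝ) ≤ 1 / r := by
      rw [le_div_iff₀ hr]; linarith
    have hgr : g r = g (1 / r) * r := by
      have := hg.ratio (1 / r) (by positivity)
      rw [one_div_one_div] at this
      rw [this]
      field_simp
    have h2 : g 1 ≤ g (1 / r) :=
      hg.mono (Set.mem_Ici.2 one_pos.le) (Set.mem_Ici.2 (by positivity)) hinv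
    calc g 1 * Real.exp (-c) ≤ g (1 / r) * r := by
          exact mul_le_mul h2 hrc (Real.exp_pos _).le (hg1.trans h2)
    _ = g r := hgr.symm


/-- Lemma 1, first part.  Lower bound on the off-diagonal transition
probabilities of path-integral Monte Carlo quantum annealing:
`G(y,x;t) ≥ w g(1) exp(-L0/T0 - L1/T1(t))` whenever `P(y,x) > 0`. -/
theorem pimc_offdiag_lower_bound
    {S : Type*} [Fintype S] [DecidableEq S] [Nonempty S]
    (P : S → S → ℝ) (hP : IsGenProb P)
    (g : ℝ → ℝ) (hg : IsAcceptFn g)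
    (F0 F1 : S → ℝ) (T0 : ℝ) (hT0 : 0 < T0)
    (T1 : ℕ → ℝ) (hT1pos : ∀ t, 0 < T1 t) (hT1anti : Antitone T1)
    (hT1lim : Tendsto T1 atTop (nhds 0)) :
    ∀ x y : S, 0 < P y x → ∀ t : ℕ, 0 < t →
      Gpimc P g F0 F1 T0 T1 t y x ≥
        wmin P * g 1 * Real.exp (-(Lmax P F0) / T0 - Lmax P F1 / T1 t) := by
  intro x y hyx t ht
  have hne : y ≠ x := by
    rintro rfl
    rw [hP.diag_zero] at hyx
    exact lt_irrefl 0 hyx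
  have hT1t := hT1pos t
  have hZ : 0 < Zfun F0 F1 T0 T1 t := by
    apply Finset.sum_pos (fun i _ => Real.exp_pos _) Finset.univ_nonempty
  set a := -(F0 y) / T0 - F1 y / T1 t with ha
  set b := -(F0 x) / T0 - F1 x / T1 t with hb
  have hr : qB F0 F1 T0 T1 t y / qB F0 F1 T0 T1 t x = Real.exp (a - b) := by
    have : qB F0 F1 T0 T1 t y / qB F0 F1 T0 T1 t x = Real.exp a / Real.exp b := by
      rw [qB, qB]
      rw [div_div_div_comm, div_self hZ.ne', div_one]
    rw [this, ← Real.exp_sub]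
  have h0 : -(Lmax P F0) ≤ F0 x - F0 y := (abs_le.mp (abs_le_Lmax F0 hyx)).1
  have h1 : -(Lmax P F1) ≤ F1 x - F1 y := (abs_le.mp (abs_le_Lmax F1 hyx)).1
  have hab : -(Lmax P F0) / T0 - Lmax P F1 / T1 t ≤ a - b := by
    rw [show a - b = (F0 x - F0 y) / T0 + (F1 x - F1 y) / T1 t by rw [ha, hb]; ring,
      show -(Lmax P F0) / T0 - Lmax P F1 / T1 t
        = (-(Lmax P F0)) / T0 + (-(Lmax P F1)) / T1 t by ring]
    gcongr
  have hc : 0 ≤ Lmax P F0 / T0 + Lmax P F1 / T1 t := by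
    have := Lmax_nonneg (P := P) F0 hyx
    have := Lmax_nonneg (P := P) F1 hyx
    positivity
  have hexp : Real.exp (-(Lmax P F0) / T0 - Lmax P F1 / T1 t)
      = Real.exp (-(Lmax P F0 / T0 + Lmax P F1 / T1 t)) := by ring_nf
  have hglow : g 1 * Real.exp (-(Lmax P F0 / T0 + Lmax P F1 / T1 t))
      ≤ g (qB F0 F1 T0 T1 t y / qB F0 F1 T0 T1 t x) := by
    rw [hr]
    exact accept_lower hg (Real.exp_pos _) hc
      (Real.exp_le_exp.2 (by rw [neg_add, ← neg_div, ← sub_eq_add_neg]; exact hab))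
  have hGval : Gpimc P g F0 F1 T0 T1 t y x
      = P y x * g (qB F0 F1 T0 T1 t y / qB F0 F1 T0 T1 t x) := by
    simp [Gpimc, GmatOf, hne]
  rw [hGval, ge_iff_le, mul_assoc, hexp]
  have hg1 : 0 ≤ g 1 := (hg.maps 1 one_pos.le).1
  apply mul_le_mul (wmin_le hyx) hglow (by positivity) hyx.le


end QAPaper
end

section
/- For the inhomogeneous Markov chain of path-integral Monte Carlo quantum annealing, let x* ∈ S∖S_m be a state attaining the minimum in the definition of R, so every state of S can reach x* within R transitions. Then there exists t1 such that for all t ≥ t1 + R and every state x ∈ S, the R-step transition probability satisfies G^{t,t−R}(x*,x) ≥ w^R · g(1)^R · exp(−R·L0/T0 − R·L1/T1(t−1)). -/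
open Finset Filter

namespace QAPaper

variable {S : Type*}

section MyAux
variable {S : Type*} [Fintype S] [DecidableEq S] [Nonempty S]

lemma my_list_prod_nonneg (l : List (Matrix S S ℝ)) (h : ∀ M ∈ l, ∀ y x, 0 ≤ M y x) :
    ∀ y x, 0 ≤ l.prod y x := by
  induction l with
  | nil => intro y x; simp [Matrix.one_apply]; positivity
  | cons M l ih =>
    intro y x
    rw [List.prod_cons, Matrix.mul_apply]
    exact Finset.sum_nonneg fun z _ => mul_nonneg (h M (by simp) y z)
      (ih (fun N hN => h N (by simp [hN])) z x)

lemma my_prod_entry_ge (G : ℕ → Matrix S S ℝ) (hnn : ∀ s y x, 0 ≤ G s y x) (t0 : ℕ) (z : ℕ → S) :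
    ∀ n, (∏ k ∈ Finset.range n, G (t0 + k) (z (k + 1)) (z k)) ≤
      (((List.range n).map fun k => G (t0 + k)).reverse).prod (z n) (z 0) := by
  intro n
  induction n with
  | zero => simp [Matrix.one_apply]
  | succ n ih =>
    rw [List.range_succ, List.map_append, List.reverse_append]
    simp only [List.map_cons, List.map_nil, List.reverse_cons, List.reverse_nil,
      List.nil_append, List.singleton_append, List.prod_cons]
    rw [Matrix.mul_apply, Finset.prod_range_succ]
    calc (∏ k ∈ Finset.range n, G (t0 + k) (z (k + 1)) (z k)) * G (t0 + n) (z (n + 1)) (z n)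
        ≤ (((List.range n).map fun k => G (t0 + k)).reverse).prod (z n) (z 0) *
            G (t0 + n) (z (n + 1)) (z n) := by
          apply mul_le_mul_of_nonneg_right ih (hnn _ _ _)
      _ = G (t0 + n) (z (n + 1)) (z n) *
            (((List.range n).map fun k => G (t0 + k)).reverse).prod (z n) (z 0) := mul_comm _ _
      _ ≤ ∑ j, G (t0 + n) (z (n + 1)) j *
            (((List.range n).map fun k => G (t0 + k)).reverse).prod j (z 0) := by
          apply Finset.single_le_sum (f := fun j => G (t0 + n) (z (n + 1)) j *
            (((List.range n).map fun k => G (t0 + k)).reverse).prod j (z 0))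
            (fun j _ => mul_nonneg (hnn _ _ _)
              (my_list_prod_nonneg _ (by intro M hM; simp at hM; obtain ⟨k,_,rfl⟩ := hM; exact hnn _) _ _))
            (Finset.mem_univ (z n))

lemma my_qB_pos (F0 F1 : S → ℝ) (T0 : ℝ) (T1 : ℕ → ℝ) (t : ℕ) (x : S) :
    0 < qB F0 F1 T0 T1 t x := by
  unfold qB Zfun
  apply div_pos (Real.exp_pos _)
  exact Finset.sum_pos (fun y _ => Real.exp_pos _) Finset.univ_nonempty

lemma my_qB_ratio (F0 F1 : S → ℝ) (T0 : ℝ) (T1 : ℕ → ℝ) (t : ℕ) (y x : S) :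
    qB F0 F1 T0 T1 t y / qB F0 F1 T0 T1 t x =
      Real.exp ((-(F0 y) / T0 - F1 y / T1 t) - (-(F0 x) / T0 - F1 x / T1 t)) := by
  have hZ : 0 < Zfun F0 F1 T0 T1 t :=
    Finset.sum_pos (fun y _ => Real.exp_pos _) Finset.univ_nonempty
  unfold qB
  rw [div_div_div_comm, div_self hZ.ne', div_one, ← Real.exp_sub]

lemma my_exists_pos_entry (P : S → S → ℝ) (hP : IsGenProb P) (x : S) :
    ∃ y, 0 < P y x := by
  by_contra h
  push_neg at h
  have : ∑ y, P y x = 0 :=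
    Finset.sum_eq_zero fun y _ => le_antisymm (h y) (hP.nonneg x y)
  rw [hP.sum_one] at this; norm_num at this

lemma my_wmin_facts (P : S → S → ℝ) (hP : IsGenProb P) :
    0 < wmin P ∧ ∀ y x, 0 < P y x → wmin P ≤ P y x := by
  set V : Set ℝ := {v | ∃ x y : S, 0 < P y x ∧ v = P y x} with hV
  have hfin : V.Finite := by
    apply Set.Finite.subset (Set.finite_range fun p : S × S => P p.2 p.1)
    rintro v ⟨x, y, _, rfl⟩; exact ⟨(x, y), rfl⟩
  have hne : V.Nonempty := by
    obtain ⟨x⟩ := (inferInstance : Nonempty S)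
    obtain ⟨y, hy⟩ := my_exists_pos_entry P hP x
    exact ⟨P y x, x, y, hy, rfl⟩
  constructor
  · obtain ⟨x, y, hpos, heq⟩ := hne.csInf_mem hfin
    rw [wmin, ← hV, heq]; exact hpos
  · intro y x h
    exact csInf_le hfin.bddBelow ⟨x, y, h, rfl⟩

lemma my_Lmax_facts (P : S → S → ℝ) (hP : IsGenProb P) (F : S → ℝ) :
    0 ≤ Lmax P F ∧ ∀ y x, 0 < P y x → |F x - F y| ≤ Lmax P F := by
  set V : Set ℝ := {v | ∃ x y : S, 0 < P y x ∧ v = |F x - F y|} with hV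
  have hfin : V.Finite := by
    apply Set.Finite.subset (Set.finite_range fun p : S × S => |F p.1 - F p.2|)
    rintro v ⟨x, y, _, rfl⟩; exact ⟨(x, y), rfl⟩
  have hne : V.Nonempty := by
    obtain ⟨x⟩ := (inferInstance : Nonempty S)
    obtain ⟨y, hy⟩ := my_exists_pos_entry P hP x
    exact ⟨|F x - F y|, x, y, hy, rfl⟩
  constructor
  · obtain ⟨x, y, hpos, heq⟩ := hne.csSup_mem hfin
    rw [Lmax, ← hV, heq]; positivity
  · intro y x h
    exact le_csSup hfin.bddAbove ⟨x, y, h, rfl⟩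
lemma my_G_apply (P : S → S → ℝ) (g : ℝ → ℝ) (F0 F1 : S → ℝ) (T0 : ℝ) (T1 : ℕ → ℝ)
    (s : ℕ) (y x : S) :
    Gpimc P g F0 F1 T0 T1 s y x =
      if y = x then 1 - ∑ z, P z x * g (qB F0 F1 T0 T1 s z / qB F0 F1 T0 T1 s x)
      else P y x * g (qB F0 F1 T0 T1 s y / qB F0 F1 T0 T1 s x) := rfl

lemma my_A_mem (g : ℝ → ℝ) (hg : IsAcceptFn g) (F0 F1 : S → ℝ) (T0 : ℝ) (T1 : ℕ → ℝ)
    (s : ℕ) (y x : S) :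
    g (qB F0 F1 T0 T1 s y / qB F0 F1 T0 T1 s x) ∈ Set.Icc (0:ℝ) 1 :=
  hg.maps _ (le_of_lt (div_pos (my_qB_pos F0 F1 T0 T1 s y) (my_qB_pos F0 F1 T0 T1 s x)))

lemma my_G_nonneg (P : S → S → ℝ) (hP : IsGenProb P) (g : ℝ → ℝ) (hg : IsAcceptFn g)
    (F0 F1 : S → ℝ) (T0 : ℝ) (T1 : ℕ → ℝ) (s : ℕ) (y x : S) :
    0 ≤ Gpimc P g F0 F1 T0 T1 s y x := by
  rw [my_G_apply]
  split
  · have h1 : ∑ z, P z x * g (qB F0 F1 T0 T1 s z / qB F0 F1 T0 T1 s x) ≤ ∑ z, P z x := by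
      apply Finset.sum_le_sum
      intro z _
      exact mul_le_of_le_one_right (hP.nonneg x z) (my_A_mem g hg F0 F1 T0 T1 s z x).2
    rw [hP.sum_one x] at h1; linarith
  · exact mul_nonneg (hP.nonneg x y) (my_A_mem g hg F0 F1 T0 T1 s y x).1

lemma my_G_diag_ge (P : S → S → ℝ) (hP : IsGenProb P) (g : ℝ → ℝ) (hg : IsAcceptFn g)
    (F0 F1 : S → ℝ) (T0 : ℝ) (T1 : ℕ → ℝ) (s : ℕ) (x y0 : S) (hy0 : 0 < P y0 x) :
    P y0 x * (1 - g (qB F0 F1 T0 T1 s y0 / qB F0 F1 T0 T1 s x)) ≤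
      Gpimc P g F0 F1 T0 T1 s x x := by
  rw [my_G_apply, if_pos rfl]
  set A : S → ℝ := fun z => g (qB F0 F1 T0 T1 s z / qB F0 F1 T0 T1 s x) with hA
  have hsplit : ∑ z, P z x * A z = P y0 x * A y0 + ∑ z ∈ Finset.univ.erase y0, P z x * A z :=
    (Finset.add_sum_erase _ _ (Finset.mem_univ y0)).symm
  have hbound : ∑ z ∈ Finset.univ.erase y0, P z x * A z ≤ 1 - P y0 x := by
    have h1 : ∑ z ∈ Finset.univ.erase y0, P z x * A z ≤ ∑ z ∈ Finset.univ.erase y0, P z x := by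
      apply Finset.sum_le_sum
      intro z _
      exact mul_le_of_le_one_right (hP.nonneg x z) (my_A_mem g hg F0 F1 T0 T1 s z x).2
    have h2 : ∑ z ∈ Finset.univ.erase y0, P z x = (∑ z, P z x) - P y0 x :=
      Finset.sum_erase_eq_sub (Finset.mem_univ y0)
    rw [h2, hP.sum_one x] at h1; exact h1
  have hA1 : A y0 ≤ 1 := (my_A_mem g hg F0 F1 T0 T1 s y0 x).2
  nlinarith [hsplit, hbound]

lemma my_G_step_ge (P : S → S → ℝ) (hP : IsGenProb P) (g : ℝ → ℝ) (hg : IsAcceptFn g)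
    (F0 F1 : S → ℝ) (T0 : ℝ) (hT0 : 0 < T0) (T1 : ℕ → ℝ) (hT1pos : ∀ t, 0 < T1 t)
    (s : ℕ) (y x : S) (hyx : 0 < P y x) :
    wmin P * g 1 * Real.exp (-(Lmax P F0) / T0 - Lmax P F1 / T1 s) ≤
      Gpimc P g F0 F1 T0 T1 s y x := by
  have hyne : y ≠ x := by
    rintro rfl; rw [hP.diag_zero] at hyx; exact lt_irrefl 0 hyx
  rw [my_G_apply, if_neg hyne]
  set u : ℝ := qB F0 F1 T0 T1 s y / qB F0 F1 T0 T1 s x with hu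
  have hupos : 0 < u := div_pos (my_qB_pos F0 F1 T0 T1 s y) (my_qB_pos F0 F1 T0 T1 s x)
  set e : ℝ := Real.exp (-(Lmax P F0) / T0 - Lmax P F1 / T1 s) with he
  have hL0 := my_Lmax_facts P hP F0
  have hL1 := my_Lmax_facts P hP F1
  have hg1 : g 1 ∈ Set.Icc (0:ℝ) 1 := hg.maps 1 (by norm_num)
  have he1 : e ≤ 1 := by
    rw [he, Real.exp_le_one_iff]
    have := hL0.1; have := hL1.1; have := (hT1pos s).le
    have h1 : -(Lmax P F0) / T0 ≤ 0 := div_nonpos_of_nonpos_of_nonneg (by linarith) hT0.le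
    have h2 : 0 ≤ Lmax P F1 / T1 s := div_nonneg hL1.1 (hT1pos s).le
    linarith
  have hepos : 0 < e := Real.exp_pos _
  have hue : e ≤ u := by
    rw [hu, my_qB_ratio, he]
    apply Real.exp_le_exp.mpr
    have h0 : F0 y - F0 x ≤ Lmax P F0 :=
      le_trans (le_abs_self _) (by rw [abs_sub_comm]; exact hL0.2 y x hyx)
    have h1 : F1 y - F1 x ≤ Lmax P F1 :=
      le_trans (le_abs_self _) (by rw [abs_sub_comm]; exact hL1.2 y x hyx)
    have key : (-(F0 y)/T0 - F1 y/T1 s) - (-(F0 x)/T0 - F1 x/T1 s)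
        = -(F0 y - F0 x)/T0 - (F1 y - F1 x)/T1 s := by ring
    rw [key]
    have d0 : -(Lmax P F0)/T0 ≤ -(F0 y - F0 x)/T0 :=
      (div_le_div_iff_of_pos_right hT0).mpr (by linarith)
    have d1 : (F1 y - F1 x)/T1 s ≤ Lmax P F1/T1 s :=
      (div_le_div_iff_of_pos_right (hT1pos s)).mpr h1
    linarith
  have hgu : g 1 * e ≤ g u := by
    rcases le_or_gt 1 u with h1u | hu1
    · have : g 1 ≤ g u := hg.mono (by norm_num) (Set.mem_Ici.mpr hupos.le) h1u
      nlinarith [hg1.1]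
    · have hru : g (1 / u) = g u / u := hg.ratio u hupos
      have hgu_eq : g u = g (1 / u) * u := by
        field_simp at hru ⊢; linarith [hru]
      have h1u : (1:ℝ) ≤ 1 / u := (le_div_iff₀ hupos).mpr (by linarith)
      have hmono : g 1 ≤ g (1 / u) :=
        hg.mono (by norm_num) (Set.mem_Ici.mpr (by positivity)) h1u
      rw [hgu_eq]
      nlinarith [hg1.1, hue, hepos]
  have hw := my_wmin_facts P hP
  calc wmin P * g 1 * Real.exp (-(Lmax P F0) / T0 - Lmax P F1 / T1 s)
      = wmin P * (g 1 * e) := by rw [he]; ring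
    _ ≤ P y x * g u := by
        apply mul_le_mul (hw.2 y x hyx) hgu (mul_nonneg hg1.1 hepos.le) (hP.nonneg x y)
end MyAux

set_option maxHeartbeats 1000000 in
/-- If `x* ∈ S \ S_m` attains the minimum in the definition of `R`
(so every state can reach `x*` within `R` transitions), then for all sufficiently
large `t` the `R`-step transition probability obeys
`G^{t,t-R}(x*,x) ≥ w^R g(1)^R exp(-R L0/T0 - R L1/T1(t-1))` for every `x`. -/
theorem pimc_R_step_lower_bound
    {S : Type*} [Fintype S] [DecidableEq S] [Nonempty S]
    (P : S → S → ℝ) (hP : IsGenProb P)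
    (g : ℝ → ℝ) (hg : IsAcceptFn g)
    (F0 F1 : S → ℝ) (T0 : ℝ) (hT0 : 0 < T0)
    (T1 : ℕ → ℝ) (hT1pos : ∀ t, 0 < T1 t) (hT1anti : Antitone T1)
    (hT1lim : Tendsto T1 atTop (nhds 0))
    (xs : S) (hxs : xs ∉ Sm P F1)
    (hxsmin : (Finset.univ.sup fun y => dSteps P xs y) = Rnum P F1) :
    ∃ t1 : ℕ, ∀ t : ℕ, t ≥ t1 + Rnum P F1 → ∀ x : S,
      prodG (Gpimc P g F0 F1 T0 T1) t (t - Rnum P F1) xs x ≥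
        wmin P ^ Rnum P F1 * g 1 ^ Rnum P F1 *
          Real.exp (-((Rnum P F1 : ℝ) * Lmax P F0) / T0 -
            (Rnum P F1 : ℝ) * Lmax P F1 / T1 (t - 1)) := by
  classical
  have hw := my_wmin_facts P hP
  have hL0 := my_Lmax_facts P hP F0
  have hL1 := my_Lmax_facts P hP F1
  have hg1 : g 1 ∈ Set.Icc (0:ℝ) 1 := hg.maps 1 (by norm_num)
  -- a neighbor of xs with strictly larger F1
  obtain ⟨y0, hy0P, hy0F⟩ : ∃ y0, 0 < P y0 xs ∧ F1 xs < F1 y0 := by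
    simp only [Sm, Set.mem_setOf_eq, not_forall] at hxs
    obtain ⟨y0, h1, h2⟩ := hxs
    exact ⟨y0, h1, lt_of_not_ge h2⟩
  set δ : ℝ := F1 y0 - F1 xs with hδ
  have hδpos : 0 < δ := by simp [hδ]; linarith
  have hL1pos : 0 < Lmax P F1 := by
    have := hL1.2 y0 xs hy0P
    have : δ ≤ Lmax P F1 := le_trans (by rw [hδ, abs_sub_comm] at *; exact (le_abs_self _)) this
    linarith
  -- limits to choose t1
  have hTin : Tendsto T1 atTop (nhdsWithin 0 (Set.Ioi 0)) :=
    tendsto_nhdsWithin_iff.mpr ⟨hT1lim, Filter.Eventually.of_forall fun s => hT1pos s⟩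
  have hTinv : Tendsto (fun s => (T1 s)⁻¹) atTop atTop :=
    tendsto_inv_nhdsGT_zero.comp hTin
  have hexp0 : ∀ c : ℝ, 0 < c →
      Tendsto (fun s => Real.exp (-(c * (T1 s)⁻¹))) atTop (nhds 0) := fun c hc =>
    Real.tendsto_exp_neg_atTop_nhds_zero.comp (hTinv.const_mul_atTop hc)
  set a : ℝ := (F0 xs - F0 y0) / T0 with ha
  have hev1 : ∀ᶠ s in atTop, Real.exp a * Real.exp (-(δ * (T1 s)⁻¹)) < 1/2 := by
    have h := (hexp0 δ hδpos).const_mul (Real.exp a)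
    simp only [mul_zero] at h
    exact h.eventually_lt_const (by norm_num)
  have hev2 : ∀ᶠ s in atTop, Real.exp (-(Lmax P F1 * (T1 s)⁻¹)) < 1/2 :=
    (hexp0 _ hL1pos).eventually_lt_const (by norm_num)
  obtain ⟨t1, ht1⟩ := eventually_atTop.mp (hev1.and hev2)
  refine ⟨t1, fun t ht x => ?_⟩
  set R := Rnum P F1 with hRdef
  -- R ≥ 1
  have hR1 : 1 ≤ R := by
    have hy0ne : y0 ≠ xs := by
      rintro rfl
      rw [hP.diag_zero] at hy0P; exact lt_irrefl 0 hy0P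
    obtain ⟨n, hn, f, hf0, hfn, hstep⟩ := hP.irreducible xs y0
    have hne : {n | ReachIn P n xs y0}.Nonempty := ⟨n, show ReachIn P n xs y0 from ⟨f, hf0, hfn, hstep⟩⟩
    have hmem : ReachIn P (dSteps P xs y0) xs y0 := Nat.sInf_mem hne
    have hd1 : 1 ≤ dSteps P xs y0 := by
      by_contra h
      push_neg at h
      interval_cases hdd : dSteps P xs y0
      · obtain ⟨f', hf'0, hf'n, _⟩ := hmem
        exact hy0ne (hf'n ▸ hf'0 ▸ rfl)
    calc 1 ≤ dSteps P xs y0 := hd1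
      _ ≤ Finset.univ.sup fun y => dSteps P xs y := Finset.le_sup (Finset.mem_univ y0)
      _ = R := hxsmin
  -- the path from x to xs of length d ≤ R, reversed from a path xs → x
  set d := dSteps P xs x with hd
  have hdR : d ≤ R := by
    rw [hd, ← hxsmin]; exact Finset.le_sup (Finset.mem_univ x)
  have hdmem : ReachIn P d xs x := by
    obtain ⟨n, hn, f, hf0, hfn, hstep⟩ := hP.irreducible xs x
    exact Nat.sInf_mem (⟨n, show ReachIn P n xs x from ⟨f, hf0, hfn, hstep⟩⟩ : {m | ReachIn P m xs x}.Nonempty)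
  obtain ⟨f, hf0, hfd, hfstep⟩ := hdmem
  set z : ℕ → S := fun k => if k ≤ d then f (d - k) else xs with hz
  have hz0 : z 0 = x := by simp [hz, hfd]
  have hzR : z R = xs := by
    by_cases hRd : R ≤ d
    · have : R = d := le_antisymm hRd hdR
      simp [hz, this, hf0]
    · simp only [hz]
      rw [if_neg (by omega : ¬ R ≤ d)]
  -- entrywise nonneg
  have hnn : ∀ s y x', 0 ≤ Gpimc P g F0 F1 T0 T1 s y x' :=
    fun s y x' => my_G_nonneg P hP g hg F0 F1 T0 T1 s y x'
  -- the one-step lower bound constant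
  set c : ℝ := wmin P * g 1 * Real.exp (-(Lmax P F0) / T0 - Lmax P F1 / T1 (t - 1)) with hc
  have hcnn : 0 ≤ c := by
    rw [hc]
    exact mul_nonneg (mul_nonneg hw.1.le hg1.1) (Real.exp_pos _).le
  -- each step along the path is ≥ c
  have hstepge : ∀ k < R, c ≤ Gpimc P g F0 F1 T0 T1 (t - R + k) (z (k + 1)) (z k) := by
    intro k hk
    set s := t - R + k with hs
    have hs1 : t1 ≤ s := by omega
    have hs2 : s ≤ t - 1 := by omega
    have hT1mono : T1 (t - 1) ≤ T1 s := hT1anti hs2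
    by_cases hkd : k < d
    · -- a genuine transition
      have hzk : z k = f (d - k) := by rw [hz]; simp [Nat.le_of_lt hkd]
      have hzk1 : z (k + 1) = f (d - (k + 1)) := by rw [hz]; simp [Nat.succ_le_of_lt hkd]
      have hPpos : 0 < P (z (k + 1)) (z k) := by
        rw [hzk, hzk1]
        have hj : d - k = (d - (k + 1)) + 1 := by omega
        rw [hP.symm, hj]
        exact hfstep (d - (k + 1)) (by omega)
      refine le_trans ?_ (my_G_step_ge P hP g hg F0 F1 T0 hT0 T1 hT1pos s _ _ hPpos)
      rw [hc]
      apply mul_le_mul_of_nonneg_left _ (mul_nonneg hw.1.le hg1.1)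
      apply Real.exp_le_exp.mpr
      have : Lmax P F1 / T1 s ≤ Lmax P F1 / T1 (t - 1) :=
        div_le_div_of_nonneg_left hL1.1 (hT1pos (t - 1)) hT1mono
      linarith
    · -- a diagonal (pause) step at xs
      have hzk : z k = xs := by
        rw [hz]
        by_cases h : k ≤ d
        · have : k = d := by omega
          simp [this, hf0]
        · simp [if_neg h]
      have hzk1 : z (k + 1) = xs := by
        simp only [hz]
        rw [if_neg (by omega : ¬ k + 1 ≤ d)]
      rw [hzk, hzk1]
      -- acceptance from xs to y0 is small
      set u0 : ℝ := qB F0 F1 T0 T1 s y0 / qB F0 F1 T0 T1 s xs with hu0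
      have hu0pos : 0 < u0 := div_pos (my_qB_pos F0 F1 T0 T1 s y0) (my_qB_pos F0 F1 T0 T1 s xs)
      have hu0eq : u0 = Real.exp a * Real.exp (-(δ * (T1 s)⁻¹)) := by
        rw [hu0, my_qB_ratio, ← Real.exp_add]
        congr 1
        rw [ha, hδ]
        field_simp
        ring
      have hu0half : u0 < 1/2 := by rw [hu0eq]; exact (ht1 s hs1).1
      have hAle : g u0 ≤ u0 := by
        have hr := hg.ratio u0 hu0pos
        have h1 : g (1 / u0) ≤ 1 := (hg.maps (1 / u0) (by positivity)).2
        have : g u0 = g (1 / u0) * u0 := by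
          rw [hr]; field_simp
        rw [this]
        nlinarith
      have hdiag := my_G_diag_ge P hP g hg F0 F1 T0 T1 s xs y0 hy0P
      refine le_trans ?_ hdiag
      -- c ≤ P y0 xs * (1 - g u0)
      have hwle : wmin P ≤ P y0 xs := hw.2 y0 xs hy0P
      have hgu0 : g u0 ≤ 1/2 := le_trans hAle hu0half.le
      have hchalf : c ≤ wmin P * (1/2) := by
        rw [hc]
        have earg : -(Lmax P F0) / T0 - Lmax P F1 / T1 (t - 1) =
            -(Lmax P F0) / T0 + -(Lmax P F1 * (T1 (t - 1))⁻¹) := by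
          ring
        rw [earg, Real.exp_add]
        have e1 : Real.exp (-(Lmax P F0) / T0) ≤ 1 := by
          apply Real.exp_le_one_iff.mpr
          have : 0 ≤ Lmax P F0 / T0 := div_nonneg hL0.1 hT0.le
          rw [neg_div]; linarith
        have e2 : Real.exp (-(Lmax P F1 * (T1 (t - 1))⁻¹)) < 1/2 := (ht1 (t - 1) (by omega)).2
        have e3 : (0:ℝ) < Real.exp (-(Lmax P F1 * (T1 (t - 1))⁻¹)) := Real.exp_pos _
        have e4 : (0:ℝ) < Real.exp (-(Lmax P F0) / T0) := Real.exp_pos _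
        have hAB : Real.exp (-(Lmax P F0) / T0) * Real.exp (-(Lmax P F1 * (T1 (t - 1))⁻¹))
            ≤ 1/2 := by nlinarith
        calc wmin P * g 1 *
              (Real.exp (-(Lmax P F0) / T0) * Real.exp (-(Lmax P F1 * (T1 (t - 1))⁻¹)))
            = wmin P * (g 1 *
              (Real.exp (-(Lmax P F0) / T0) * Real.exp (-(Lmax P F1 * (T1 (t - 1))⁻¹)))) := by
              ring
          _ ≤ wmin P * (1/2) := by
              apply mul_le_mul_of_nonneg_left _ hw.1.le
              nlinarith [hg1.1, hg1.2]
      refine hchalf.trans ?_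
      have h12 : (1:ℝ)/2 ≤ 1 - g u0 := by linarith
      calc wmin P * (1/2) ≤ P y0 xs * (1/2) := by
            apply mul_le_mul_of_nonneg_right hwle (by norm_num)
        _ ≤ P y0 xs * (1 - g u0) := mul_le_mul_of_nonneg_left h12 (hP.nonneg xs y0)
  -- assemble the product bound
  have hmain := my_prod_entry_ge (Gpimc P g F0 F1 T0 T1) hnn (t - R) z R
  rw [hzR, hz0] at hmain
  have hprod : c ^ R ≤ ∏ k ∈ Finset.range R, Gpimc P g F0 F1 T0 T1 (t - R + k) (z (k + 1)) (z k) := by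
    calc c ^ R = ∏ _k ∈ Finset.range R, c := by rw [Finset.prod_const, Finset.card_range]
      _ ≤ _ := Finset.prod_le_prod (fun k _ => hcnn) (fun k hk =>
          hstepge k (Finset.mem_range.mp hk))
  have hfinal : wmin P ^ R * g 1 ^ R *
      Real.exp (-((R : ℝ) * Lmax P F0) / T0 - (R : ℝ) * Lmax P F1 / T1 (t - 1)) = c ^ R := by
    rw [hc, mul_pow, mul_pow]
    congr 1
    rw [← Real.exp_nat_mul]
    congr 1
    field_simp
  have hteq : t - (t - R) = R := by omega
  show prodG (Gpimc P g F0 F1 T0 T1) t (t - R) xs x ≥ _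
  unfold prodG
  rw [hteq, hfinal]
  exact le_trans hprod hmain

end QAPaper
end
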